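/- Let G=(V,E) be a general dissimilarity graph and let C be a cycle of G with δ(C) = δ(G) > 0 and top edge t=(α,β). Then the path C∖t obtained from C by removing its top edge is a shortest path between α and β; that is, the sum of the weights of the non-top edges of C equals d(α,β). -/

import Mathlib

open SimpleGraph

noncomputable section

variable {V : Type*}

/-- The length of a walk: the sum of the weights of its edges. -/
def wlen {G : SimpleGraph V} (w : Sym2 V → ℝ) {u v : V} (p : G.Walk u v) : ℝ :=
  (p.edges.map w).sum

/-- The shortest-path distance between two vertices: the minimum length of a path. -/
def spDist (G : SimpleGraph V) (w : Sym2 V → ℝ) (u v : V) : ℝ :=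
  sInf {x : ℝ | ∃ p : G.Walk u v, p.IsPath ∧ wlen w p = x}

/-- The number of distinct shortest paths from `u` to `v`. -/
def csp (G : SimpleGraph V) (w : Sym2 V → ℝ) (u v : V) : ℕ :=
  Nat.card {p : G.Walk u v // p.IsPath ∧ wlen w p = spDist G w u v}

/-- `c` is the edge set of some cycle of `G`.  (A cycle is determined, up to
rotation and reflection, by its edge set.) -/
def IsCycleSet [DecidableEq V] (G : SimpleGraph V) (c : Finset (Sym2 V)) : Prop :=
  ∃ (v : V) (p : G.Walk v v), p.IsCycle ∧ p.edges.toFinset = c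

/-- `e` is a top edge of the cycle with edge set `c`: it lies in `c` and its
weight strictly exceeds the sum of the weights of all the other edges of `c`. -/
def TopOfSet [DecidableEq V] (w : Sym2 V → ℝ) (c : Finset (Sym2 V)) (e : Sym2 V) : Prop :=
  e ∈ c ∧ ∑ f ∈ c.erase e, w f < w e

/-- A cycle is unbalanced if it has a top edge. -/
def UnbalancedSet [DecidableEq V] (w : Sym2 V → ℝ) (c : Finset (Sym2 V)) : Prop :=
  ∃ e, TopOfSet w c e

/-- `S` contains at least one edge of every unbalanced cycle. -/
def RegularCoverSet [DecidableEq V] (G : SimpleGraph V) (w : Sym2 V → ℝ)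
    (S : Set (Sym2 V)) : Prop :=
  ∀ c : Finset (Sym2 V), IsCycleSet G c → UnbalancedSet w c → ∃ e ∈ c, e ∈ S

/-- `S` contains at least one non-top edge of every unbalanced cycle. -/
def NonTopCoverSet [DecidableEq V] (G : SimpleGraph V) (w : Sym2 V → ℝ)
    (S : Set (Sym2 V)) : Prop :=
  ∀ c : Finset (Sym2 V), IsCycleSet G c → UnbalancedSet w c →
    ∃ e ∈ c, e ∈ S ∧ ¬ TopOfSet w c e

/-- The deficit of a cycle with edge set `c`: the largest edge weight minus the
sum of the weights of all the other edges. -/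
def deficitSet (w : Sym2 V → ℝ) (c : Finset (Sym2 V)) : ℝ :=
  2 * sSup (w '' (c : Set (Sym2 V))) - ∑ f ∈ c, w f

/-- `δ(G)`: the maximum deficit over all cycles of `G`. -/
def deltaG [DecidableEq V] (G : SimpleGraph V) (w : Sym2 V → ℝ) : ℝ :=
  sSup {x : ℝ | ∃ c : Finset (Sym2 V), IsCycleSet G c ∧ deficitSet w c = x}

/-- `N_T(e, a)`: the number of distinct unbalanced cycles of deficit `a`
whose top edge is `e`. -/
def NT [DecidableEq V] (G : SimpleGraph V) (w : Sym2 V → ℝ) (e : Sym2 V) (a : ℝ) : ℕ :=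
  Nat.card {c : Finset (Sym2 V) // IsCycleSet G c ∧ TopOfSet w c e ∧ deficitSet w c = a}

/-- `N_U(e, a)`: the number of distinct unbalanced cycles of deficit `a`
containing `e` as a non-top edge. -/
def NU [DecidableEq V] (G : SimpleGraph V) (w : Sym2 V → ℝ) (e : Sym2 V) (a : ℝ) : ℕ :=
  Nat.card {c : Finset (Sym2 V) // IsCycleSet G c ∧ UnbalancedSet w c ∧
    e ∈ c ∧ ¬ TopOfSet w c e ∧ deficitSet w c = a}

/-! If a path `Q` from `α` to `β` were shorter than `C ∖ t`, it could not contain `t`, whose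
weight alone exceeds that of `C ∖ t`. Then `Q + t` is a cycle of deficit at least
`w t - |Q| > w t - |C ∖ t| = δ(C) = δ(G)`, contradicting the maximality of `δ(G)`. The last
equality holds because a top edge is the heaviest edge of its cycle. -/

lemma Finset.le_csSup_image {α : Type*} (f : α → ℝ) {s : Finset α} {x : α} (hx : x ∈ s) :
    f x ≤ sSup (f '' ↑s) :=
  le_csSup (s.finite_toSet.image f).bddAbove (Set.mem_image_of_mem f hx)

namespace SimpleGraph.Walk

variable {G : SimpleGraph V} {a b : V}

lemma IsCycle.snd_eq_or_penultimate_eq_of_mem_edges {q : G.Walk a a} (hq : q.IsCycle)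
    (hb : s(a, b) ∈ q.edges) : q.snd = b ∨ q.penultimate = b := by
  cases q with
  | nil => simp at hb
  | cons h p =>
    have hp : p.IsPath := ((cons_isCycle_iff p h).mp hq).1
    rcases List.mem_cons.mp hb with he | he
    · left
      rw [snd_cons]
      exact (Sym2.congr_right.mp he).symm
    · right
      rw [penultimate_cons_of_not_nil h p (edges_eq_nil.not.mp (List.ne_nil_of_mem he))]
      exact (hp.eq_penultimate_of_mem_edges he).symm

lemma IsCycle.edges_perm_cons_edges_reverse_tail {q : G.Walk a a} (hq : q.IsCycle) :
    q.edges.Perm (s(a, q.snd) :: q.tail.reverse.edges) := by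
  conv_lhs => rw [← cons_tail_eq q hq.not_nil]
  rw [edges_cons, edges_reverse]
  exact (List.reverse_perm _).symm.cons _

lemma IsCycle.exists_isPath_edges_perm {q : G.Walk a a} (hq : q.IsCycle)
    (hb : s(a, b) ∈ q.edges) :
    ∃ r : G.Walk a b, r.IsPath ∧ q.edges.Perm (s(a, b) :: r.edges) := by
  rcases hq.snd_eq_or_penultimate_eq_of_mem_edges hb with rfl | hpen
  · exact ⟨_, hq.isPath_tail.reverse, hq.edges_perm_cons_edges_reverse_tail⟩
  · rw [← snd_reverse] at hpen
    subst hpen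
    refine ⟨_, hq.reverse.isPath_tail.reverse, ?_⟩
    refine (List.reverse_perm q.edges).symm.trans ?_
    rw [← edges_reverse]
    exact hq.reverse.edges_perm_cons_edges_reverse_tail

end SimpleGraph.Walk

section

variable {G : SimpleGraph V} {w : Sym2 V → ℝ}

lemma le_wlen_of_mem_edges (hw : ∀ e ∈ G.edgeSet, 0 ≤ w e) {u v : V} {p : G.Walk u v}
    {e : Sym2 V} (he : e ∈ p.edges) : w e ≤ wlen w p :=
  List.single_le_sum (List.forall_mem_map.mpr fun f hf => hw f (p.edges_subset_edgeSet hf)) _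
    (List.mem_map_of_mem he)

lemma spDist_eq_wlen_of_forall_le {u v : V} {r : G.Walk u v} (hr : r.IsPath)
    (hmin : ∀ q : G.Walk u v, q.IsPath → wlen w r ≤ wlen w q) :
    spDist G w u v = wlen w r :=
  IsLeast.csInf_eq ⟨⟨r, hr, rfl⟩, by rintro _ ⟨q, hq, rfl⟩; exact hmin q hq⟩

end

section

variable [DecidableEq V] {G : SimpleGraph V} {c : Finset (Sym2 V)} {a b : V}

lemma IsCycleSet.subset_edgeSet (hc : IsCycleSet G c) : ↑c ⊆ G.edgeSet := by
  obtain ⟨v, p, -, rfl⟩ := hc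
  intro e he
  exact p.edges_subset_edgeSet (List.mem_toFinset.mp he)

lemma IsCycleSet.exists_isPath_erase (hc : IsCycleSet G c) (hab : s(a, b) ∈ c) :
    ∃ r : G.Walk a b, r.IsPath ∧ c.erase s(a, b) = r.edges.toFinset := by
  obtain ⟨v, p, hp, rfl⟩ := hc
  have hpab : s(a, b) ∈ p.edges := List.mem_toFinset.mp hab
  have ha : a ∈ p.support := p.fst_mem_support_of_mem_edges hpab
  have hrot : (p.rotate a ha).edges.Perm p.edges := (p.rotate_edges a ha).perm
  obtain ⟨r, hr, hperm⟩ :=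
    (hp.rotate ha).exists_isPath_edges_perm (hrot.mem_iff.mpr hpab)
  have hnotin : s(a, b) ∉ r.edges :=
    (List.nodup_cons.mp (hperm.nodup_iff.mp (hp.rotate ha).edges_nodup)).1
  refine ⟨r, hr, ?_⟩
  rw [← List.toFinset_eq_of_perm _ _ hrot, List.toFinset_eq_of_perm _ _ hperm,
    List.toFinset_cons, Finset.erase_insert (by simpa using hnotin)]

lemma SimpleGraph.Walk.IsTrail.wlen_eq_sum (w : Sym2 V → ℝ) {u v : V} {p : G.Walk u v}
    (hp : p.IsTrail) : wlen w p = ∑ f ∈ p.edges.toFinset, w f :=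
  (List.sum_toFinset w hp.edges_nodup).symm

lemma SimpleGraph.Walk.IsPath.isCycleSet_insert {q : G.Walk a b} (hq : q.IsPath) (hab : G.Adj a b)
    (hnotin : s(a, b) ∉ q.edges) : IsCycleSet G (insert s(a, b) q.edges.toFinset) :=
  ⟨a, .cons hab q.reverse,
    (Walk.cons_isCycle_iff _ _).mpr ⟨hq.reverse, by simpa using hnotin⟩, by simp⟩

variable (w : Sym2 V → ℝ)

lemma sub_sum_erase_le_deficitSet {t : Sym2 V} (ht : t ∈ c) :
    w t - ∑ f ∈ c.erase t, w f ≤ deficitSet w c := by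
  have hmax := Finset.le_csSup_image w ht
  rw [deficitSet, ← Finset.add_sum_erase c w ht]
  linarith

variable {w}

lemma deficitSet_eq_of_topOfSet (hw : ∀ f ∈ c, 0 ≤ w f) {t : Sym2 V} (ht : TopOfSet w c t) :
    deficitSet w c = w t - ∑ f ∈ c.erase t, w f := by
  have hmax : sSup (w '' ↑c) ≤ w t := by
    refine csSup_le ⟨w t, Set.mem_image_of_mem w ht.1⟩ ?_
    rintro _ ⟨f, hf, rfl⟩
    by_cases hft : f = t
    · rw [hft]
    · calc w f ≤ ∑ g ∈ c.erase t, w g :=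
            Finset.single_le_sum (fun g hg => hw g (Finset.mem_of_mem_erase hg))
              (Finset.mem_erase.mpr ⟨hft, hf⟩)
        _ ≤ w t := ht.2.le
  rw [deficitSet, le_antisymm hmax (Finset.le_csSup_image w ht.1),
    ← Finset.add_sum_erase c w ht.1]
  ring

lemma deficitSet_le_deltaG [Finite V] (hc : IsCycleSet G c) : deficitSet w c ≤ deltaG G w :=
  le_csSup ((Set.finite_range (deficitSet w)).subset
    (by rintro _ ⟨c, -, rfl⟩; exact ⟨c, rfl⟩)).bddAbove ⟨c, hc, rfl⟩

variable (w) in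
lemma sub_wlen_le_deltaG [Finite V] (hab : G.Adj a b) {q : G.Walk a b} (hq : q.IsPath)
    (hnotin : s(a, b) ∉ q.edges) : w s(a, b) - wlen w q ≤ deltaG G w := by
  have hcyc := hq.isCycleSet_insert hab hnotin
  calc w s(a, b) - wlen w q
      = w s(a, b) - ∑ f ∈ (insert s(a, b) q.edges.toFinset).erase s(a, b), w f := by
        rw [Finset.erase_insert (by simpa using hnotin), hq.isTrail.wlen_eq_sum w]
    _ ≤ deficitSet w (insert s(a, b) q.edges.toFinset) :=
        sub_sum_erase_le_deficitSet w (Finset.mem_insert_self _ _)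
    _ ≤ deltaG G w := deficitSet_le_deltaG hcyc

end

theorem stmt18_general [Fintype V] [DecidableEq V] (G : SimpleGraph V)
    (w : Sym2 V → ℝ) (hw : ∀ e ∈ G.edgeSet, 0 < w e)
    (c : Finset (Sym2 V)) (hc : IsCycleSet G c)
    (a b : V) (htop : TopOfSet w c s(a, b))
    (hdef : deficitSet w c = deltaG G w) :
    ∑ f ∈ c.erase s(a, b), w f = spDist G w a b := by
  have hw₀ : ∀ e ∈ G.edgeSet, 0 ≤ w e := fun e he => (hw e he).le
  obtain ⟨r, hr, herase⟩ := hc.exists_isPath_erase htop.1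
  have hsum : ∑ f ∈ c.erase s(a, b), w f = wlen w r := by
    rw [herase, hr.isTrail.wlen_eq_sum w]
  rw [hsum, spDist_eq_wlen_of_forall_le hr]
  intro q hq
  rw [← hsum]
  by_cases hq_top : s(a, b) ∈ q.edges
  · exact (htop.2.trans_le (le_wlen_of_mem_edges hw₀ hq_top)).le
  · have hδ := sub_wlen_le_deltaG w (hc.subset_edgeSet htop.1) hq hq_top
    rw [← hdef, deficitSet_eq_of_topOfSet (fun f hf => hw₀ f (hc.subset_edgeSet hf)) htop]
      at hδ
    linarith

/-- If `C` is a cycle with `δ(C) = δ(G) > 0` and top edge `t = (α,β)`, then the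
path `C ∖ t` is a shortest path between `α` and `β`: the sum of the weights of
the non-top edges of `C` equals `d(α,β)`. -/
theorem stmt18 [Fintype V] [DecidableEq V] (G : SimpleGraph V)
    (hconn : G.Connected) (w : Sym2 V → ℝ) (hw : ∀ e ∈ G.edgeSet, 0 < w e)
    (c : Finset (Sym2 V)) (hc : IsCycleSet G c)
    (a b : V) (htop : TopOfSet w c s(a, b))
    (hdef : deficitSet w c = deltaG G w) (hpos : 0 < deltaG G w) :
    ∑ f ∈ c.erase s(a, b), w f = spDist G w a b :=
  stmt18_general G w hw c hc a b htop hdef
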